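/- Let Λ be a probability measure on ℝ^d. For any n, any probability measures P₁, …, Pₙ on ℝ^d each satisfying φ_{P_i}(ω) ≠ 0 for Λ-almost every ω, and any real numbers α₁, …, αₙ, one has ∑_{i=1}^n ∑_{j=1}^n α_i α_j K(P_i, P_j) ≥ 0, where K(P,Q) = ∫ ⟨ (∫ ξ_ω dP)/‖∫ ξ_ω dP‖ , (∫ ξ_ω dQ)/‖∫ ξ_ω dQ‖ ⟩ dΛ(ω); that is, K is a positive definite kernel on probability measures whose characteristic functions are Λ-a.e. nonvanishing. -/

import Mathlib

open MeasureTheory RealInnerProductSpace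

/-- The characteristic function of a measure `P` on `ℝ^d`. -/
noncomputable def charFun {d : ℕ} (P : Measure (EuclideanSpace ℝ (Fin d)))
    (ω : EuclideanSpace ℝ (Fin d)) : ℂ :=
  ∫ x, Complex.exp (Complex.I * (⟪ω, x⟫ : ℝ)) ∂P

/-- The Fourier feature map `ξ_ω(x) = (cos⟨ω,x⟩, sin⟨ω,x⟩)`, valued in Euclidean `ℝ²`. -/
noncomputable def xi {d : ℕ} (ω x : EuclideanSpace ℝ (Fin d)) : EuclideanSpace ℝ (Fin 2) :=
  (WithLp.equiv 2 (Fin 2 → ℝ)).symm ![Real.cos (⟪ω, x⟫ : ℝ), Real.sin (⟪ω, x⟫ : ℝ)]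

/-- The mean Fourier feature `∫ ξ_ω dP ∈ ℝ²`. -/
noncomputable def meanFeat {d : ℕ} (P : Measure (EuclideanSpace ℝ (Fin d)))
    (ω : EuclideanSpace ℝ (Fin d)) : EuclideanSpace ℝ (Fin 2) :=
  ∫ x, xi ω x ∂P

/-- The kernel `K(P,Q) = ∫ ⟨∫ξ_ω dP/‖∫ξ_ω dP‖, ∫ξ_ω dQ/‖∫ξ_ω dQ‖⟩ dΛ(ω)`. -/
noncomputable def K {d : ℕ} (Λ : Measure (EuclideanSpace ℝ (Fin d)))
    (P Q : Measure (EuclideanSpace ℝ (Fin d))) : ℝ :=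
  ∫ ω, (⟪(‖meanFeat P ω‖)⁻¹ • meanFeat P ω, (‖meanFeat Q ω‖)⁻¹ • meanFeat Q ω⟫ : ℝ) ∂Λ

/-!
Writing `u_P(ω) = ‖∫ ξ_ω dP‖⁻¹ • ∫ ξ_ω dP`, the kernel is `K(P, Q) = ∫ ⟪u_P ω, u_Q ω⟫ dΛ(ω)`, and
`∑ᵢ ∑ⱼ αᵢ αⱼ K(Pᵢ, Pⱼ) = ∫ ‖∑ᵢ αᵢ u_{Pᵢ} ω‖² dΛ(ω) ≥ 0`. The only analytic input is that the integrands
are integrable: each `u_P` is measurable (the mean feature is continuous in `ω` by dominated convergence)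
and bounded by `1`.
-/

section GramIntegral

variable {X E ι : Type*} [NormedAddCommGroup E] [InnerProductSpace ℝ E] [Fintype ι]

theorem sum_sum_mul_real_inner_eq (v : ι → E) (α : ι → ℝ) :
    ∑ i, ∑ j, α i * α j * ⟪v i, v j⟫ = ⟪∑ i, α i • v i, ∑ j, α j • v j⟫ := by
  rw [sum_inner]
  refine Finset.sum_congr rfl fun i _ => ?_
  rw [inner_sum]
  refine Finset.sum_congr rfl fun j _ => ?_
  rw [real_inner_smul_left, real_inner_smul_right, mul_assoc]

theorem sum_sum_mul_integral_inner_nonneg [MeasurableSpace X] (μ : Measure X) (u : ι → X → E)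
    (hu : ∀ i j, Integrable (fun x => ⟪u i x, u j x⟫) μ) (α : ι → ℝ) :
    0 ≤ ∑ i, ∑ j, α i * α j * ∫ x, ⟪u i x, u j x⟫ ∂μ := by
  have hterm : ∀ i j, Integrable (fun x => α i * α j * ⟪u i x, u j x⟫) μ :=
    fun i j => (hu i j).const_mul _
  calc 0 ≤ ∫ x, ⟪∑ i, α i • u i x, ∑ j, α j • u j x⟫ ∂μ :=
        integral_nonneg fun _ => real_inner_self_nonneg
    _ = ∫ x, ∑ i, ∑ j, α i * α j * ⟪u i x, u j x⟫ ∂μ := by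
        simp only [sum_sum_mul_real_inner_eq]
    _ = ∑ i, ∑ j, α i * α j * ∫ x, ⟪u i x, u j x⟫ ∂μ := by
        rw [integral_finsetSum _ fun i _ => integrable_finsetSum _ fun j _ => hterm i j]
        refine Finset.sum_congr rfl fun i _ => ?_
        rw [integral_finsetSum _ fun j _ => hterm i j]
        simp only [integral_const_mul]

end GramIntegral

theorem norm_inv_norm_smul_le {E : Type*} [NormedAddCommGroup E] [NormedSpace ℝ E] (v : E) :
    ‖‖v‖⁻¹ • v‖ ≤ 1 := by
  rcases eq_or_ne v 0 with rfl | hv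
  · simp
  · exact (norm_smul_inv_norm hv).le

section MeanFeature

variable {d : ℕ}

theorem norm_xi (ω x : EuclideanSpace ℝ (Fin d)) : ‖xi ω x‖ = 1 := by
  simp [EuclideanSpace.norm_eq, xi, Fin.sum_univ_two]

theorem continuous_xi_left (x : EuclideanSpace ℝ (Fin d)) : Continuous fun ω => xi ω x :=
  (PiLp.continuous_toLp 2 _).comp (by fun_prop)

theorem continuous_xi_right (ω : EuclideanSpace ℝ (Fin d)) : Continuous (xi ω) :=
  (PiLp.continuous_toLp 2 _).comp (by fun_prop)

theorem continuous_meanFeat (Q : Measure (EuclideanSpace ℝ (Fin d))) [IsFiniteMeasure Q] :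
    Continuous (meanFeat Q) :=
  continuous_of_dominated (fun ω => (continuous_xi_right ω).aestronglyMeasurable)
    (fun ω => by simp [norm_xi]) (integrable_const 1)
    (ae_of_all _ continuous_xi_left)

theorem integrable_inner_normalized_meanFeat (Λ P Q : Measure (EuclideanSpace ℝ (Fin d)))
    [IsFiniteMeasure Λ] [IsFiniteMeasure P] [IsFiniteMeasure Q] :
    Integrable (fun ω => ⟪‖meanFeat P ω‖⁻¹ • meanFeat P ω, ‖meanFeat Q ω‖⁻¹ • meanFeat Q ω⟫) Λ := by
  have hP := (continuous_meanFeat P).measurable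
  have hQ := (continuous_meanFeat Q).measurable
  refine .of_bound ((hP.norm.inv.smul hP).inner (hQ.norm.inv.smul hQ)).aestronglyMeasurable 1
    (ae_of_all _ fun ω => ?_)
  calc ‖⟪‖meanFeat P ω‖⁻¹ • meanFeat P ω, ‖meanFeat Q ω‖⁻¹ • meanFeat Q ω⟫‖
      ≤ ‖‖meanFeat P ω‖⁻¹ • meanFeat P ω‖ * ‖‖meanFeat Q ω‖⁻¹ • meanFeat Q ω‖ :=
        norm_inner_le_norm _ _
    _ ≤ 1 := mul_le_one₀ (norm_inv_norm_smul_le _) (norm_nonneg _) (norm_inv_norm_smul_le _)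

end MeanFeature

theorem stmt_10_general {d : ℕ} (Λ : Measure (EuclideanSpace ℝ (Fin d))) [IsProbabilityMeasure Λ]
    (n : ℕ) (P : Fin n → Measure (EuclideanSpace ℝ (Fin d)))
    (hP : ∀ i, IsProbabilityMeasure (P i))
    (α : Fin n → ℝ) :
    0 ≤ ∑ i, ∑ j, α i * α j * K Λ (P i) (P j) :=
  sum_sum_mul_integral_inner_nonneg Λ (fun i ω => ‖meanFeat (P i) ω‖⁻¹ • meanFeat (P i) ω)
    (fun i j => have := hP i; have := hP j; integrable_inner_normalized_meanFeat Λ (P i) (P j)) α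

/-- `K` is a positive definite kernel on probability measures whose characteristic
functions are `Λ`-a.e. nonvanishing. -/
theorem stmt_10 {d : ℕ} (Λ : Measure (EuclideanSpace ℝ (Fin d))) [IsProbabilityMeasure Λ]
    (n : ℕ) (P : Fin n → Measure (EuclideanSpace ℝ (Fin d)))
    (hP : ∀ i, IsProbabilityMeasure (P i))
    (hφ : ∀ i, ∀ᵐ ω ∂Λ, _root_.charFun (P i) ω ≠ 0) (α : Fin n → ℝ) :
    0 ≤ ∑ i, ∑ j, α i * α j * K Λ (P i) (P j) :=
  stmt_10_general Λ n P hP α
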